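/- Let Φ be a reduced crystallographic simply-laced root system with base Δ, let α, β ∈ Δ be simple roots with ⟨α,β⟩ = −1 (adjacent simple roots), and let λ be a root with c_α(λ) = 0. Then ⟨λ,α⟩·⟨λ,β⟩ ≤ 0. -/

import Mathlib

open scoped InnerProductSpace

namespace PaperRS

variable {E : Type*} [NormedAddCommGroup E] [InnerProductSpace ℝ E]

/-- A reduced crystallographic simply-laced root system, normalized so that every root has
squared length `2` (hence `⟪δ, ε⟫` is the Cartan integer `⟨δ, ε^∨⟩`). -/
structure IsRootSystem (Φ : Set E) : Prop where
  finite : Φ.Finite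
  nonzero : (0 : E) ∉ Φ
  span_top : Submodule.span ℝ Φ = ⊤
  norm_two : ∀ α ∈ Φ, ⟪α, α⟫_ℝ = 2
  reduced : ∀ α ∈ Φ, ∀ t : ℝ, t • α ∈ Φ → t = 1 ∨ t = -1
  cartan_int : ∀ α ∈ Φ, ∀ β ∈ Φ, ∃ n : ℤ, ⟪α, β⟫_ℝ = (n : ℝ)
  reflect_mem : ∀ α ∈ Φ, ∀ β ∈ Φ, β - ⟪β, α⟫_ℝ • α ∈ Φ

/-- Irreducibility: `Φ` is nonempty and cannot be split into two mutually orthogonal parts. -/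
def IsIrreducible (Φ : Set E) : Prop :=
  Φ.Nonempty ∧ ∀ Φ₁ Φ₂ : Set E, Φ = Φ₁ ∪ Φ₂ →
    (∀ a ∈ Φ₁, ∀ b ∈ Φ₂, ⟪a, b⟫_ℝ = 0) → Φ₁ = ∅ ∨ Φ₂ = ∅

/-- The reflection in (the hyperplane orthogonal to) a root `α` of squared length `2`. -/
def sRefl (α : E) : Function.End E := fun x => x - ⟪x, α⟫_ℝ • α

/-- The group generated by the reflections in the elements of `S`; since every reflection is
an involution, the submonoid generated by the reflections coincides with the generated group. -/
def genBy (S : Set E) : Submonoid (Function.End E) :=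
  Submonoid.closure (sRefl '' S)

/-- The Weyl group of `Φ`: the group generated by the reflections in all the roots. -/
abbrev WeylGroup (Φ : Set E) : Submonoid (Function.End E) := genBy Φ

/-- A base (set of simple roots) of `Φ`, together with the (unique) integer coefficients
`coeff δ γ` of each root `δ` with respect to the simple roots. -/
structure Base (Φ : Set E) where
  Δ : Finset E
  coeff : E → E → ℤ
  subset : ↑Δ ⊆ Φ
  indep : LinearIndependent ℝ (fun γ : {x : E // x ∈ Δ} => (γ : E))
  expand : ∀ δ ∈ Φ, δ = ∑ γ ∈ Δ, (coeff δ γ : ℝ) • γ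
  sign : ∀ δ ∈ Φ, (∀ γ ∈ Δ, 0 ≤ coeff δ γ) ∨ (∀ γ ∈ Δ, coeff δ γ ≤ 0)

variable {Φ : Set E}

/-- `θ` is the highest root of `Φ` with respect to the base `B`. -/
def IsHighest (B : Base Φ) (θ : E) : Prop :=
  θ ∈ Φ ∧ ∀ δ ∈ Φ, ∀ γ ∈ B.Δ, B.coeff δ γ ≤ B.coeff θ γ

/-- `α` is a Heisenberg simple root: the highest root `θ` has `α`-coefficient `2`, and every
root other than `±θ` has `α`-coefficient in `{-1, 0, 1}`. -/
def IsHeisenberg (B : Base Φ) (θ α : E) : Prop :=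
  B.coeff θ α = 2 ∧
    ∀ δ ∈ Φ, δ ≠ θ → δ ≠ -θ →
      B.coeff δ α = -1 ∨ B.coeff δ α = 0 ∨ B.coeff δ α = 1

/-- `α` is an extreme simple root with (unique) neighbour `β`. -/
def IsExtreme (B : Base Φ) (α β : E) : Prop :=
  β ∈ B.Δ ∧ β ≠ α ∧ ⟪α, β⟫_ℝ ≠ 0 ∧
    ∀ γ ∈ B.Δ, γ ≠ α → ⟪α, γ⟫_ℝ ≠ 0 → γ = β

/-- `Φ_α`: the roots with `α`-coefficient `1` that are orthogonal to `α`. -/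
def PhiSet (B : Base Φ) (α : E) : Set E :=
  {ε ∈ Φ | B.coeff ε α = 1 ∧ ⟪ε, α⟫_ℝ = 0}

/-- `Ψ_α`: the roots `ε` with `α`-coefficient `1` and `⟪ε, α⟫ ≤ 0`. -/
def PsiSet (B : Base Φ) (α : E) : Set E :=
  {ε ∈ Φ | B.coeff ε α = 1 ∧ ⟪ε, α⟫_ℝ ≤ 0}

lemma eq_of_two_le_inner {μ ν : E} (hμ : ⟪μ, μ⟫_ℝ = 2) (hν : ⟪ν, ν⟫_ℝ = 2)
    (h : 2 ≤ ⟪μ, ν⟫_ℝ) : μ = ν := by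
  have hsq : ⟪μ - ν, μ - ν⟫_ℝ ≤ 0 := by
    rw [inner_sub_sub_self, real_inner_comm μ ν, hμ, hν]
    linarith
  exact sub_eq_zero.mp (inner_self_eq_zero.mp (le_antisymm hsq real_inner_self_nonneg))

lemma IsRootSystem.neg_mem (hΦ : IsRootSystem Φ) {δ : E} (hδ : δ ∈ Φ) : -δ ∈ Φ := by
  have h := hΦ.reflect_mem δ hδ δ hδ
  rwa [hΦ.norm_two δ hδ, show δ - (2 : ℝ) • δ = -δ by module] at h

namespace Base

variable (B : Base Φ)

lemma coeff_eq_of_eq_sum {δ : E} (hδ : δ ∈ Φ) (c : E → ℝ) (h : δ = ∑ γ ∈ B.Δ, c γ • γ)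
    {γ : E} (hγ : γ ∈ B.Δ) : (B.coeff δ γ : ℝ) = c γ := by
  have hdiff : ∑ x : B.Δ, ((B.coeff δ x : ℝ) - c x) • (x : E) = 0 := by
    rw [Finset.sum_coe_sort B.Δ fun x => ((B.coeff δ x : ℝ) - c x) • x]
    simp only [sub_smul, Finset.sum_sub_distrib]
    rw [← B.expand δ hδ, ← h, sub_self]
  exact sub_eq_zero.mp <|
    linearIndependent_iff'.mp B.indep Finset.univ _ hdiff ⟨γ, hγ⟩ (Finset.mem_univ _)

lemma coeff_neg {δ : E} (hδ : δ ∈ Φ) (hδ' : -δ ∈ Φ) {γ : E} (hγ : γ ∈ B.Δ) :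
    B.coeff (-δ) γ = -B.coeff δ γ := by
  have h := B.coeff_eq_of_eq_sum hδ' (fun x => -(B.coeff δ x : ℝ))
    (by simp_rw [neg_smul, Finset.sum_neg_distrib, ← B.expand δ hδ]) hγ
  exact_mod_cast h

lemma coeff_eq_of_eq_smul_add {δ α β : E} (hδ : δ ∈ Φ) (hα : α ∈ B.Δ) (hβ : β ∈ B.Δ)
    (hne : α ≠ β) {n : ℤ} (h : δ = (n : ℝ) • α + β) : B.coeff δ α = n := by
  classical
  have h' := B.coeff_eq_of_eq_sum hδ
    (fun γ => (if γ = α then (n : ℝ) else 0) + if γ = β then 1 else 0)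
    (by simp [h, add_smul, Finset.sum_add_distrib, ite_smul, hα, hβ]) hα
  simpa [hne] using h'

end Base

/-- If `⟪λ, α⟫ = n` and `⟪λ, β⟫` are positive, then `s_α λ = λ - n α` pairs with `β` to at
least `2`, so it equals `β` and `λ = n α + β`. -/
lemma Base.coeff_ne_zero_of_inner_pos (hΦ : IsRootSystem Φ) (B : Base Φ) {α β : E}
    (hα : α ∈ B.Δ) (hβ : β ∈ B.Δ) (hadj : ⟪α, β⟫_ℝ = -1) {l : E} (hl : l ∈ Φ)
    (hlα : 0 < ⟪l, α⟫_ℝ) (hlβ : 0 < ⟪l, β⟫_ℝ) : B.coeff l α ≠ 0 := by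
  have hαΦ := B.subset hα
  have hβΦ := B.subset hβ
  have hne : α ≠ β := by
    rintro rfl
    linarith [hΦ.norm_two α hαΦ]
  obtain ⟨n, hn⟩ := hΦ.cartan_int l hl α hαΦ
  obtain ⟨m, hm⟩ := hΦ.cartan_int l hl β hβΦ
  have hn1 : (1 : ℝ) ≤ n := by
    rw [hn] at hlα
    exact_mod_cast (Int.cast_pos.mp hlα : 0 < n)
  have hm1 : (1 : ℝ) ≤ m := by
    rw [hm] at hlβ
    exact_mod_cast (Int.cast_pos.mp hlβ : 0 < m)
  have hrefl : l - (n : ℝ) • α ∈ Φ := hn ▸ hΦ.reflect_mem α hαΦ l hl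
  have hpair : 2 ≤ ⟪l - (n : ℝ) • α, β⟫_ℝ := by
    rw [inner_sub_left, real_inner_smul_left, hm, hadj]
    linarith
  have heq := eq_of_two_le_inner (hΦ.norm_two _ hrefl) (hΦ.norm_two β hβΦ) hpair
  rw [B.coeff_eq_of_eq_smul_add hl hα hβ hne (by rw [← heq]; abel)]
  exact_mod_cast (by linarith : (n : ℝ) ≠ 0)

/-- If `α, β` are adjacent simple roots (`⟪α, β⟫ = -1`) and `λ` is a root with
`α`-coefficient `0`, then `⟪λ, α⟫ ⬝ ⟪λ, β⟫ ≤ 0`. -/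
theorem pairing_product_nonpos
    (hΦ : IsRootSystem Φ) (B : Base Φ)
    {α β : E} (hα : α ∈ B.Δ) (hβ : β ∈ B.Δ) (hadj : ⟪α, β⟫_ℝ = -1)
    {l : E} (hl : l ∈ Φ) (hc : B.coeff l α = 0) :
    ⟪l, α⟫_ℝ * ⟪l, β⟫_ℝ ≤ 0 := by
  by_contra! hpos
  rcases pos_and_pos_or_neg_and_neg_of_mul_pos hpos with ⟨hlα, hlβ⟩ | ⟨hlα, hlβ⟩
  · exact B.coeff_ne_zero_of_inner_pos hΦ hα hβ hadj hl hlα hlβ hc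
  · have hl' := hΦ.neg_mem hl
    refine B.coeff_ne_zero_of_inner_pos hΦ hα hβ hadj hl' ?_ ?_ ?_
    · simpa [inner_neg_left] using hlα
    · simpa [inner_neg_left] using hlβ
    · rw [B.coeff_neg hl hl' hα, hc, neg_zero]

end PaperRS
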